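/- arXiv:1206.4001 — 3 statements merged into one kernel-verified Lean document; each statement's English description precedes it below -/
import Mathlib

section
/- Let q ≥ 2, n ≥ 2, and let P_{q-1}(n) be the number of down-sets of [n]^q under the coordinatewise order. Then there exists a q-coloring of the triples of a linearly ordered set of size P_{q-1}(n) with no monochromatic monotone path of length n. That is, N_3(q,n) > P_{q-1}(n). -/
/-- `S ⊆ [n]^q` is a down-set (w.r.t. the coordinatewise order). -/
def IsDownSet {d n : ℕ} (S : Set (Fin d → Fin n)) : Prop :=
  ∀ ⦃x y : Fin d → Fin n⦄, x ≤ y → y ∈ S → x ∈ S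

/-- `P_{q-1}(n)`: the number of down-sets of `[n]^q`. -/
noncomputable def Pnum (q n : ℕ) : ℕ := Nat.card {S : Set (Fin q → Fin n) // IsDownSet S}

/-- Monochromatic monotone path of length `n` in a coloring of triples. -/
def HasMonoPath3 {N q : ℕ} (n : ℕ) (c : Fin N → Fin N → Fin N → Fin q) : Prop :=
  ∃ x : Fin (n + 2) → Fin N, StrictMono x ∧ ∃ col : Fin q,
    ∀ i : ℕ, ∀ _ : i < n,
      c (x ⟨i, by omega⟩) (x ⟨i + 1, by omega⟩) (x ⟨i + 2, by omega⟩) = col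

/-!
Upper bound: in a coloring with no monochromatic monotone path of length `n`, let `L_k(x, y) < n`
be the length of the longest monotone path of color `k` starting with the pair `x < y`. If the
triple `w < x < y` has color `k` then `L_k(w, x) > L_k(x, y)`. Hence the down-set
`D(x) = {v | ∀ w < x, ∃ k, v_k < L_k(w, x)}` of `[n]^q` contains `L(x, y)` while `D(y)` does not,
so `x ↦ D(x)` is injective and there are at most `P_{q-1}(n)` vertices.

Lower bound: list the down-sets `D_1, …, D_P` by nondecreasing size, so that `D_j ⊄ D_i` for
`i < j`, and pick `ψ(i, j) ∈ D_j \ D_i`. For `i < j < l`, `ψ(i, j) ∈ D_j` and `ψ(j, l) ∉ D_j`,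
so some coordinate satisfies `ψ(i, j)_k < ψ(j, l)_k`; color `(i, j, l)` by such a `k`. Along a
monochromatic path the `k`-th coordinates of the `n + 1` consecutive pairs then strictly
increase inside `Fin n`.
-/

theorem IsDownSet.exists_lt_of_mem_of_notMem {d n : ℕ} {S : Set (Fin d → Fin n)}
    (hS : IsDownSet S) {v w : Fin d → Fin n} (hv : v ∈ S) (hw : w ∉ S) : ∃ k, v k < w k := by
  by_contra! h
  exact hw (hS (fun k => h k) hv)

theorem forall_hasMonoPath3_of_le {M N q n : ℕ} (hMN : M ≤ N)
    (h : ∀ c : Fin M → Fin M → Fin M → Fin q, HasMonoPath3 n c)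
    (c : Fin N → Fin N → Fin N → Fin q) : HasMonoPath3 n c := by
  let e := Fin.castLE hMN
  obtain ⟨x, hx, col, hcol⟩ := h fun a b d => c (e a) (e b) (e d)
  exact ⟨e ∘ x, (Fin.strictMono_castLE hMN).comp hx, col, hcol⟩

theorem exists_equiv_fin_monotone {α : Type*} [Finite α] (f : α → ℕ) :
    ∃ e : Fin (Nat.card α) ≃ α, Monotone (f ∘ e) := by
  let e₀ := (Finite.equivFin α).symm
  exact ⟨(Tuple.sort (f ∘ e₀)).trans e₀, Tuple.monotone_sort (f ∘ e₀)⟩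

theorem exists_equiv_fin_not_subset {β : Type*} [Finite β] (P : Set β → Prop) :
    ∃ e : Fin (Nat.card {S // P S}) ≃ {S // P S}, ∀ i j, i < j → ¬ (e j : Set β) ⊆ e i := by
  obtain ⟨e, he⟩ := exists_equiv_fin_monotone fun S : {S // P S} => S.1.ncard
  refine ⟨e, fun i j hij hsub => hij.ne' (e.injective (Subtype.ext ?_))⟩
  exact Set.eq_of_subset_of_ncard_le hsub (he hij.le) (Set.toFinite _)

section UpperBound

variable {N q : ℕ} (c : Fin N → Fin N → Fin N → Fin q)

-- Only `f 0, …, f (m + 1)` matter; indexing by `ℕ` makes prepending a vertex definitional.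
def IsMonoPath (k : Fin q) (m : ℕ) (f : ℕ → Fin N) : Prop :=
  (∀ i ≤ m, f i < f (i + 1)) ∧ ∀ i < m, c (f i) (f (i + 1)) (f (i + 2)) = k

def monoPathLengths (k : Fin q) (x y : Fin N) : Set ℕ :=
  {m | ∃ f, IsMonoPath c k m f ∧ f 0 = x ∧ f 1 = y}

noncomputable def longestMonoPath (k : Fin q) (x y : Fin N) : ℕ :=
  sSup (monoPathLengths c k x y)

def pathDownSet (n : ℕ) (x : Fin N) : Set (Fin q → Fin n) :=
  {v | ∀ w < x, ∃ k, (v k : ℕ) < longestMonoPath c k w x}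

theorem isDownSet_pathDownSet (n : ℕ) (x : Fin N) : IsDownSet (pathDownSet c n x) := by
  intro u v huv hv w hwx
  obtain ⟨k, hk⟩ := hv w hwx
  exact ⟨k, lt_of_le_of_lt (huv k) hk⟩

variable {c} {n : ℕ}

theorem IsMonoPath.hasMonoPath3 {k : Fin q} {m : ℕ} {f : ℕ → Fin N}
    (hf : IsMonoPath c k m f) (hnm : n ≤ m) : HasMonoPath3 n c :=
  ⟨fun i => f i, Fin.strictMono_iff_lt_succ.2 fun i => hf.1 i (by omega), k,
    fun i hi => hf.2 i (by omega)⟩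

theorem zero_mem_monoPathLengths (k : Fin q) {x y : Fin N} (hxy : x < y) :
    0 ∈ monoPathLengths c k x y := by
  refine ⟨fun | 0 => x | _ + 1 => y, ⟨fun i hi => ?_, fun i hi => absurd hi i.not_lt_zero⟩,
    rfl, rfl⟩
  obtain rfl : i = 0 := by omega
  exact hxy

theorem succ_mem_monoPathLengths {w x y : Fin N} {m : ℕ} (hwx : w < x)
    (hm : m ∈ monoPathLengths c (c w x y) x y) : m + 1 ∈ monoPathLengths c (c w x y) w x := by
  obtain ⟨f, ⟨hlt, hcol⟩, rfl, rfl⟩ := hm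
  refine ⟨fun | 0 => w | i + 1 => f i, ⟨?_, ?_⟩, rfl, rfl⟩
  · rintro (_ | i) hi
    exacts [hwx, hlt i (by omega)]
  · rintro (_ | i) hi
    exacts [rfl, hcol i (by omega)]

theorem lt_of_mem_monoPathLengths (hc : ¬ HasMonoPath3 n c) {k : Fin q} {x y : Fin N} {m : ℕ}
    (hm : m ∈ monoPathLengths c k x y) : m < n := by
  obtain ⟨f, hf, -⟩ := hm
  by_contra! hnm
  exact hc (hf.hasMonoPath3 hnm)

theorem bddAbove_monoPathLengths (hc : ¬ HasMonoPath3 n c) (k : Fin q) (x y : Fin N) :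
    BddAbove (monoPathLengths c k x y) :=
  ⟨n, fun _ hm => (lt_of_mem_monoPathLengths hc hm).le⟩

theorem longestMonoPath_mem (hc : ¬ HasMonoPath3 n c) (k : Fin q) {x y : Fin N} (hxy : x < y) :
    longestMonoPath c k x y ∈ monoPathLengths c k x y :=
  Nat.sSup_mem ⟨0, zero_mem_monoPathLengths k hxy⟩ (bddAbove_monoPathLengths hc k x y)

theorem longestMonoPath_lt (hc : ¬ HasMonoPath3 n c) (k : Fin q) {x y : Fin N} (hxy : x < y) :
    longestMonoPath c k x y < n :=
  lt_of_mem_monoPathLengths hc (longestMonoPath_mem hc k hxy)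

theorem longestMonoPath_lt_longestMonoPath (hc : ¬ HasMonoPath3 n c) {w x y : Fin N}
    (hwx : w < x) (hxy : x < y) :
    longestMonoPath c (c w x y) x y < longestMonoPath c (c w x y) w x :=
  le_csSup (bddAbove_monoPathLengths hc _ w x)
    (succ_mem_monoPathLengths hwx (longestMonoPath_mem hc _ hxy))

theorem pathDownSet_injective (hc : ¬ HasMonoPath3 n c) : (pathDownSet c n).Injective := by
  refine Function.Injective.of_lt_imp_ne fun x y hxy heq => ?_
  let v : Fin q → Fin n := fun k => ⟨longestMonoPath c k x y, longestMonoPath_lt hc k hxy⟩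
  have hvx : v ∈ pathDownSet c n x := fun w hwx =>
    ⟨c w x y, longestMonoPath_lt_longestMonoPath hc hwx hxy⟩
  obtain ⟨k, hk⟩ := (heq ▸ hvx) x hxy
  exact lt_irrefl _ hk

theorem le_pnum_of_not_hasMonoPath3 (hc : ¬ HasMonoPath3 n c) : N ≤ Pnum q n := by
  simpa [Pnum] using Nat.card_le_card_of_injective
    (fun x => (⟨pathDownSet c n x, isDownSet_pathDownSet c n x⟩ : {S // IsDownSet S}))
    fun x y hxy => pathDownSet_injective hc (congrArg Subtype.val hxy)

theorem hasMonoPath3_of_pnum_lt (hN : Pnum q n < N) (c : Fin N → Fin N → Fin N → Fin q) :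
    HasMonoPath3 n c :=
  not_not.1 fun hc => hN.not_ge (le_pnum_of_not_hasMonoPath3 hc)

end UpperBound

section LowerBound

variable {N q n : ℕ}

theorem exists_not_hasMonoPath3_of_labels (hq : 0 < q)
    (Ψ : ∀ i j : Fin N, i < j → Fin q → Fin n)
    (hΨ : ∀ i j l (hij : i < j) (hjl : j < l), ∃ k, Ψ i j hij k < Ψ j l hjl k) :
    ∃ c : Fin N → Fin N → Fin N → Fin q, ¬ HasMonoPath3 n c := by
  choose κ hκ using hΨ
  refine ⟨fun i j l => if h : i < j ∧ j < l then κ i j l h.1 h.2 else ⟨0, hq⟩, ?_⟩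
  rintro ⟨x, hx, col, hcol⟩
  have hstep (t : Fin (n + 1)) : x t.castSucc < x t.succ := hx Fin.castSucc_lt_succ
  let a : Fin (n + 1) → Fin n := fun t => Ψ _ _ (hstep t) col
  refine (Fin.le_of_injective a (Fin.strictMono_iff_lt_succ.2 fun t => ?_).injective).not_gt
    (Nat.lt_succ_self n)
  have hcolt : κ _ _ _ (hstep t.castSucc) (hstep t.succ) = col :=
    (dif_pos (show _ ∧ _ from ⟨hstep t.castSucc, hstep t.succ⟩)).symm.trans (hcol t t.2)
  have hlt := hκ _ _ _ (hstep t.castSucc) (hstep t.succ)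
  rw [hcolt] at hlt
  exact hlt

theorem exists_not_hasMonoPath3_of_downSets (hq : 0 < q) (D : Fin N → Set (Fin q → Fin n))
    (hD : ∀ i, IsDownSet (D i)) (hsep : ∀ i j, i < j → ¬ D j ⊆ D i) :
    ∃ c : Fin N → Fin N → Fin N → Fin q, ¬ HasMonoPath3 n c := by
  choose Ψ hΨD hΨnD using fun i j (hij : i < j) => Set.not_subset.1 (hsep i j hij)
  exact exists_not_hasMonoPath3_of_labels hq Ψ fun i j l hij hjl =>
    (hD j).exists_lt_of_mem_of_notMem (hΨD i j hij) (hΨnD j l hjl)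

theorem exists_not_hasMonoPath3_pnum (hq : 0 < q) :
    ∃ c : Fin (Pnum q n) → Fin (Pnum q n) → Fin (Pnum q n) → Fin q, ¬ HasMonoPath3 n c := by
  obtain ⟨e, he⟩ := exists_equiv_fin_not_subset (IsDownSet (d := q) (n := n))
  exact exists_not_hasMonoPath3_of_downSets hq (fun i => e i) (fun i => (e i).2) he

end LowerBound

theorem stmt7_general (q n : ℕ) (hq : 2 ≤ q) :
    (∃ c : Fin (Pnum q n) → Fin (Pnum q n) → Fin (Pnum q n) → Fin q,
        ¬ HasMonoPath3 n c) ∧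
    Pnum q n < sInf {N : ℕ | ∀ c : Fin N → Fin N → Fin N → Fin q, HasMonoPath3 n c} := by
  obtain ⟨c, hc⟩ := exists_not_hasMonoPath3_pnum (n := n) (by omega : 0 < q)
  have hsInf : sInf {N : ℕ | ∀ c : Fin N → Fin N → Fin N → Fin q, HasMonoPath3 n c}
      = Pnum q n + 1 :=
    (Nat.sInf_upward_closed_eq_succ_iff (fun _ _ hle h => forall_hasMonoPath3_of_le hle h) _).2
      ⟨hasMonoPath3_of_pnum_lt (Nat.lt_succ_self _), fun h => hc (h c)⟩
  exact ⟨⟨c, hc⟩, hsInf ▸ Nat.lt_succ_self _⟩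

/-- For `q ≥ 2`, `n ≥ 2` there is a `q`-coloring of the triples of a linearly ordered
set of size `P_{q-1}(n)` with no monochromatic monotone path of length `n`; that is,
`N_3(q,n) > P_{q-1}(n)`. -/
theorem stmt7 (q n : ℕ) (hq : 2 ≤ q) (hn : 2 ≤ n) :
    (∃ c : Fin (Pnum q n) → Fin (Pnum q n) → Fin (Pnum q n) → Fin q,
        ¬ HasMonoPath3 n c) ∧
    Pnum q n < sInf {N : ℕ | ∀ c : Fin N → Fin N → Fin N → Fin q, HasMonoPath3 n c} :=
  stmt7_general q n hq
end

section
/- For every q ≥ 2 and n ≥ 2, N_3(q,n) = P_{q-1}(n) + 1, where N_3(q,n) is the smallest N such that every q-coloring of the triples of {1,...,N} contains a monochromatic monotone path of length n, and P_{q-1}(n) is the number of down-sets of [n]^q under the coordinatewise order. -/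
/-!
Label each pair `i < j` of `Fin N` by a vector `g i j ∈ [n]^q` such that `g j k ≰ g i j` whenever
`i < j < k`. Such labellings exist iff `N` is at most the number of down-sets of `[n]^q`: the
down-sets generated by the labels of the pairs ending at `j` are pairwise distinct, and conversely,
listing the down-sets along a linear extension of inclusion, `g a b` can be taken in the `b`-th
down-set but outside the `a`-th one.

A coloring with no monochromatic path of length `n` yields such a labelling: coordinate `col` of
`g i j` is the length of the longest path of color `col` ending with `i, j`. Conversely, color a
triple `h < i < j` by a coordinate in which `g i j` exceeds `g h i`; along a monochromatic path
that coordinate would then increase `n + 1` times inside `Fin n`.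
-/

theorem pnum_eq_card_lowerSet (q n : ℕ) : Pnum q n = Nat.card (LowerSet (Fin q → Fin n)) :=
  Nat.card_congr
    { toFun := fun S => ⟨S.1, fun _ _ hba ha => S.2 hba ha⟩
      invFun := fun T => ⟨T, fun _ _ hxy hy => T.lower hxy hy⟩
      left_inv := fun _ => rfl
      right_inv := fun _ => rfl }

section Labelling

variable {β : Type*} [PartialOrder β] {N : ℕ}

def IsNotLeLabelling (g : ∀ i j : Fin N, i < j → β) : Prop :=
  ∀ ⦃i j k : Fin N⦄ (hij : i < j) (hjk : j < k), ¬ g j k hjk ≤ g i j hij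

theorem le_card_lowerSet_of_isNotLeLabelling [Finite β] {g : ∀ i j : Fin N, i < j → β}
    (hg : IsNotLeLabelling g) : N ≤ Nat.card (LowerSet β) := by
  let F : Fin N → LowerSet β := fun j =>
    lowerClosure (Set.range fun i : {i // i < j} => g i j i.2)
  have mem_F : ∀ i j (hij : i < j), g i j hij ∈ F j := fun i j hij =>
    subset_lowerClosure ⟨⟨i, hij⟩, rfl⟩
  have not_mem_F : ∀ i j (hij : i < j), g i j hij ∉ F i := by
    intro i j hij hmem
    obtain ⟨_, ⟨⟨h, hhi⟩, rfl⟩, hle⟩ := mem_lowerClosure.1 hmem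
    exact hg hhi hij hle
  have hF : Function.Injective F := by
    intro i j hFij
    by_contra hne
    rcases lt_or_gt_of_ne hne with h | h
    · exact not_mem_F i j h (hFij ▸ mem_F i j h)
    · exact not_mem_F j i h (hFij ▸ mem_F j i h)
  simpa using Nat.card_le_card_of_injective F hF

theorem exists_isNotLeLabelling_of_le_card_lowerSet [Finite β]
    (hN : N ≤ Nat.card (LowerSet β)) : ∃ g : ∀ i j : Fin N, i < j → β, IsNotLeLabelling g := by
  have : Fintype (LinearExtension (LowerSet β)) := Fintype.ofFinite (LowerSet β)
  let E := Fintype.orderIsoFinOfCardEq (LinearExtension (LowerSet β))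
    (Nat.card_eq_fintype_card (α := LinearExtension (LowerSet β))).symm
  let e : Fin N → LowerSet β := fun a => E (Fin.castLE hN a)
  have not_le : ∀ a b : Fin N, a < b → ¬ e b ≤ e a := fun a b hab hle =>
    (E.lt_iff_lt.2 ((Fin.castLE_lt_castLE_iff hN).2 hab)).not_ge
      ((toLinearExtension (α := LowerSet β)).monotone hle)
  have : ∀ a b : Fin N, a < b → ∃ v ∈ e b, v ∉ e a := fun a b hab =>
    Set.not_subset.1 fun hsub => not_le a b hab (LowerSet.coe_subset_coe.1 hsub)
  choose g hg_mem hg_not_mem using this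
  exact ⟨g, fun a b c hab hbc hle => hg_not_mem b c hbc ((e b).lower hle (hg_mem a b hab))⟩

theorem exists_isNotLeLabelling_iff [Finite β] :
    (∃ g : ∀ i j : Fin N, i < j → β, IsNotLeLabelling g) ↔ N ≤ Nat.card (LowerSet β) :=
  ⟨fun ⟨_, hg⟩ => le_card_lowerSet_of_isNotLeLabelling hg,
    exists_isNotLeLabelling_of_le_card_lowerSet⟩

end Labelling

section MonoPath

variable {N q n : ℕ} (c : Fin N → Fin N → Fin N → Fin q)

def HasMonoPathEndingAt (col : Fin q) (m : ℕ) (i j : Fin N) : Prop :=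
  ∃ x : ℕ → Fin N, (∀ t ≤ m, x t < x (t + 1)) ∧ x m = i ∧ x (m + 1) = j ∧
    ∀ t < m, c (x t) (x (t + 1)) (x (t + 2)) = col

variable {c}

theorem hasMonoPathEndingAt_zero {col : Fin q} {i j : Fin N} (hij : i < j) :
    HasMonoPathEndingAt c col 0 i j :=
  ⟨fun t => if t = 0 then i else j, fun t ht => by simpa [Nat.le_zero.1 ht] using hij,
    rfl, rfl, fun _ ht => absurd ht (Nat.not_lt_zero _)⟩

theorem HasMonoPathEndingAt.extend {col : Fin q} {m : ℕ} {h i j : Fin N}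
    (hp : HasMonoPathEndingAt c col m h i) (hij : i < j) (hc : c h i j = col) :
    HasMonoPathEndingAt c col (m + 1) i j := by
  obtain ⟨x, hx, hxh, hxi, hcol⟩ := hp
  refine ⟨fun t => if t ≤ m + 1 then x t else j, fun t ht => ?_, ?_, ?_, fun t ht => ?_⟩
  · rcases Nat.lt_or_eq_of_le ht with ht | rfl
    · simpa [show t ≤ m + 1 by omega, show t + 1 ≤ m + 1 by omega] using hx t (by omega)
    · simpa [hxi] using hij
  · simpa using hxi
  · simp
  · rcases Nat.lt_or_eq_of_le (Nat.le_of_lt_succ ht) with ht | rfl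
    · simpa [show t ≤ m + 1 by omega, show t + 1 ≤ m + 1 by omega,
        show t + 2 ≤ m + 1 by omega] using hcol t ht
    · simpa [hxh, hxi] using hc

theorem HasMonoPathEndingAt.hasMonoPath3 {col : Fin q} {m : ℕ} {i j : Fin N}
    (hp : HasMonoPathEndingAt c col m i j) (hnm : n ≤ m) : HasMonoPath3 n c := by
  obtain ⟨x, hx, -, -, hcol⟩ := hp
  exact ⟨fun t => x t, Fin.strictMono_iff_lt_succ.2 fun t => hx t (by omega), col,
    fun t ht => hcol t (by omega)⟩

theorem exists_isNotLeLabelling_of_not_hasMonoPath3 (hc : ¬ HasMonoPath3 n c) :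
    ∃ g : ∀ i j : Fin N, i < j → (Fin q → Fin n), IsNotLeLabelling g := by
  classical
  let L (col : Fin q) (i j : Fin N) : ℕ :=
    Nat.findGreatest (fun m => HasMonoPathEndingAt c col m i j) n
  have path_L : ∀ col i j, i < j → HasMonoPathEndingAt c col (L col i j) i j :=
    fun col i j hij => Nat.findGreatest_spec (P := fun m => HasMonoPathEndingAt c col m i j)
      (Nat.zero_le n) (hasMonoPathEndingAt_zero hij)
  have L_lt : ∀ col i j, i < j → L col i j < n := fun col i j hij =>
    Nat.lt_of_not_le fun hle => hc ((path_L col i j hij).hasMonoPath3 hle)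
  refine ⟨fun i j hij col => ⟨L col i j, L_lt col i j hij⟩, fun h i j hhi hij hle => ?_⟩
  have h_le : L (c h i j) i j ≤ L (c h i j) h i := hle (c h i j)
  have h_succ_le : L (c h i j) h i + 1 ≤ L (c h i j) i j :=
    Nat.le_findGreatest (L_lt _ h i hhi) ((path_L _ h i hhi).extend hij rfl)
  omega

theorem exists_not_hasMonoPath3_of_isNotLeLabelling (hq : 0 < q)
    {g : ∀ i j : Fin N, i < j → (Fin q → Fin n)} (hg : IsNotLeLabelling g) :
    ∃ c : Fin N → Fin N → Fin N → Fin q, ¬ HasMonoPath3 n c := by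
  classical
  have : ∀ a b d (hab : a < b) (hbd : b < d), ∃ col, g a b hab col < g b d hbd col := by
    intro a b d hab hbd
    simpa [Pi.le_def] using hg hab hbd
  choose colorOf h_colorOf using this
  let c a b d : Fin q := if h : a < b ∧ b < d then colorOf a b d h.1 h.2 else ⟨0, hq⟩
  refine ⟨c, fun ⟨x, hx, col, hcol⟩ => ?_⟩
  let v : Fin (n + 1) → Fin n := fun t => g (x t.castSucc) (x t.succ) (hx t.castSucc_lt_succ) col
  have hv : StrictMono v := Fin.strictMono_iff_lt_succ.2 fun t => by
    have h₁ : x t.castSucc.castSucc < x t.succ.castSucc := hx t.castSucc.castSucc_lt_succ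
    have h₂ : x t.succ.castSucc < x t.succ.succ := hx t.succ.castSucc_lt_succ
    have hc_eq : c (x t.castSucc.castSucc) (x t.succ.castSucc) (x t.succ.succ)
        = colorOf _ _ _ h₁ h₂ := dif_pos ⟨h₁, h₂⟩
    have hct : colorOf _ _ _ h₁ h₂ = col := hc_eq.symm.trans (hcol t t.2)
    have hlt := h_colorOf _ _ _ h₁ h₂
    rwa [hct] at hlt
  simpa using Fintype.card_le_of_injective v hv.injective

theorem exists_not_hasMonoPath3_iff (hq : 0 < q) :
    (∃ c : Fin N → Fin N → Fin N → Fin q, ¬ HasMonoPath3 n c) ↔ N ≤ Pnum q n := by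
  rw [pnum_eq_card_lowerSet, ← exists_isNotLeLabelling_iff]
  exact ⟨fun ⟨_, hc⟩ => exists_isNotLeLabelling_of_not_hasMonoPath3 hc,
    fun ⟨_, hg⟩ => exists_not_hasMonoPath3_of_isNotLeLabelling hq hg⟩

end MonoPath

theorem stmt8_general (q n : ℕ) (hq : 2 ≤ q) :
    sInf {N : ℕ | ∀ c : Fin N → Fin N → Fin N → Fin q, HasMonoPath3 n c}
      = Pnum q n + 1 := by
  suffices h : {N : ℕ | ∀ c : Fin N → Fin N → Fin N → Fin q, HasMonoPath3 n c}
      = Set.Ici (Pnum q n + 1) by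
    rw [h, csInf_Ici]
  ext N
  rw [Set.mem_ofPred_eq, Set.mem_Ici, Nat.add_one_le_iff, ← not_le,
    ← exists_not_hasMonoPath3_iff (by omega), not_exists_not]

/-- For every `q ≥ 2` and `n ≥ 2`, `N_3(q,n) = P_{q-1}(n) + 1`. -/
theorem stmt8 (q n : ℕ) (hq : 2 ≤ q) (hn : 2 ≤ n) :
    sInf {N : ℕ | ∀ c : Fin N → Fin N → Fin N → Fin q, HasMonoPath3 n c}
      = Pnum q n + 1 :=
  stmt8_general q n hq
end

section
/- For every k ≥ 2 and n ≥ 2, N_k(2,n) = ρ_k(n) + 1, where ρ_k(n) = |P^k[n]| is the number of order-k line partitions. -/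
/-- Monochromatic monotone path of length `n` in a `2`-coloring of the `k`-subsets of
`{0,…,N-1}`: vertices `x_0 < ⋯ < x_{n+k-2}` such that all `n` consecutive `k`-tuples
receive the same color. -/
def HasMonoPathK (k : ℕ) {N q : ℕ} (n : ℕ) (c : (Fin k → Fin N) → Fin q) : Prop :=
  ∃ x : Fin (n + k - 1) → Fin N, StrictMono x ∧ ∃ col : Fin q,
    ∀ i : ℕ, ∀ _ : i < n,
      c (fun j => x ⟨i + j.1, by have := j.2; omega⟩) = col

/-- Order-`k` line partitions live in the iterated type `PT n j`, where `PT n 0`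
represents `P^2[n] = [n]^2` and `PT n (j+1)` consists of finite families of elements of
`PT n j`. -/
def PT (n : ℕ) : ℕ → Type
  | 0 => Fin n × Fin n
  | k + 1 => Finset (PT n k)

instance PT.decEq (n : ℕ) : (k : ℕ) → DecidableEq (PT n k)
  | 0 => inferInstanceAs (DecidableEq (Fin n × Fin n))
  | k + 1 =>
    have := PT.decEq n k
    inferInstanceAs (DecidableEq (Finset (PT n k)))

/-- The containment order: coordinatewise on `P^2[n] = [n]^2`, set containment above. -/
def PT.Sub (n : ℕ) : (k : ℕ) → PT n k → PT n k → Prop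
  | 0 => fun a b : Fin n × Fin n => a.1 ≤ b.1 ∧ a.2 ≤ b.2
  | k + 1 => fun F G : Finset (PT n k) => F ⊆ G

/-- `PT.IsPart n k` cuts out `P^{k+2}[n]`: every element of `PT n 0 = [n]^2` is an
order-`2` line partition, and an order-`(k+3)` line partition is a family of
order-`(k+2)` line partitions closed downwards under containment. -/
def PT.IsPart (n : ℕ) : (k : ℕ) → PT n k → Prop
  | 0 => fun _ => True
  | k + 1 => fun F : Finset (PT n k) =>
      ∀ S ∈ F, PT.IsPart n k S ∧ ∀ S', PT.IsPart n k S' → PT.Sub n k S' S → S' ∈ F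

/-!
Lower bound. Enumerate the order-`k` line partitions along a linear extension of containment,
so that a later one is never contained in an earlier one. Colour a `k`-set `x₀ < ⋯ < x_{k-1}` by
reducing the chain `ν(x₀), …, ν(x_{k-1})` one level at a time, replacing each consecutive pair
`F, G` by a point of `G \ F`; since the families are down-closed, consecutive terms stay
non-contained. What remains is a pair `p, q` in `[n]²` with `q ≰ p`; colour it red iff the first
coordinate increases. Along a monochromatic path of length `n` one coordinate would increase
`n` times inside `[n]`.

Upper bound. Given a colouring without monochromatic path of length `n`, label a `(k-1)`-tuple by
the lengths of the longest red and blue paths ending in it, and a `(k-1-d)`-tuple `a` by the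
down-closure of the labels of the tuples `u :: a` with `u < a₀`. By induction on `d`, shifting
a new last vertex into a tuple never lowers its label below the old one; at the top level this
makes `v ↦ label v` an injection into the order-`k` line partitions.
-/

namespace PT

instance instPartialOrder (n : ℕ) : (j : ℕ) → PartialOrder (PT n j)
  | 0 => inferInstanceAs (PartialOrder (Fin n × Fin n))
  | j + 1 => inferInstanceAs (PartialOrder (Finset (PT n j)))

instance instFintype (n : ℕ) : (j : ℕ) → Fintype (PT n j)
  | 0 => inferInstanceAs (Fintype (Fin n × Fin n))
  | j + 1 =>
    have := instFintype n j
    inferInstanceAs (Fintype (Finset (PT n j)))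

instance instNonempty (n : ℕ) [NeZero n] : (j : ℕ) → Nonempty (PT n j)
  | 0 => inferInstanceAs (Nonempty (Fin n × Fin n))
  | j + 1 => inferInstanceAs (Nonempty (Finset (PT n j)))

instance instMembership (n j : ℕ) : Membership (PT n j) (PT n (j + 1)) :=
  inferInstanceAs (Membership (PT n j) (Finset (PT n j)))

variable {n j : ℕ}

theorem sub_iff_le : ∀ {j : ℕ} {a b : PT n j}, PT.Sub n j a b ↔ a ≤ b
  | 0, _, _ => Iff.rfl
  | _ + 1, _, _ => Iff.rfl

theorem IsPart.of_mem {F : PT n (j + 1)} (hF : PT.IsPart n (j + 1) F) {S : PT n j}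
    (hS : S ∈ F) : PT.IsPart n j S :=
  (hF S hS).1

theorem IsPart.mem_of_le {F : PT n (j + 1)} (hF : PT.IsPart n (j + 1) F) {S S' : PT n j}
    (hS : S ∈ F) (hS' : PT.IsPart n j S') (h : S' ≤ S) : S' ∈ F :=
  (hF S hS).2 S' hS' (sub_iff_le.2 h)

end PT

theorem exists_fin_not_le_of_le_card {α : Type*} [PartialOrder α] [Finite α] {N : ℕ}
    (hN : N ≤ Nat.card α) : ∃ f : Fin N → α, ∀ i j, i < j → ¬ f j ≤ f i := by
  have := Fintype.ofFinite α
  let _ : Fintype (LinearExtension α) := inferInstanceAs (Fintype α)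
  let e := Fintype.orderIsoFinOfCardEq (LinearExtension α) Nat.card_eq_fintype_card.symm
  refine ⟨fun i => (e (Fin.castLE hN i) : α), fun i j hij hle => ?_⟩
  have hlt : e (Fin.castLE hN i) < e (Fin.castLE hN j) :=
    e.lt_iff_lt.2 ((Fin.castLE_lt_castLE_iff hN).2 hij)
  have hle' : e (Fin.castLE hN j) ≤ e (Fin.castLE hN i) :=
    (toLinearExtension (α := α)).monotone hle
  exact hle'.not_gt hlt

theorem lt_of_forall_castSucc_lt_succ {m n : ℕ} {p : Fin (m + 1) → Fin n}
    (hp : ∀ i : Fin m, p i.castSucc < p i.succ) : m < n :=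
  Fin.le_of_injective p (Fin.strictMono_iff_lt_succ.2 hp).injective

namespace MonotonePath

def gridColor {n : ℕ} (a b : Fin n × Fin n) : Fin 2 :=
  if a.1 < b.1 then 0 else 1

theorem lt_of_gridColor_eq {m n : ℕ} (p : Fin (m + 1) → Fin n × Fin n)
    (hp : ∀ i : Fin m, ¬ p i.succ ≤ p i.castSucc) (col : Fin 2)
    (hcol : ∀ i : Fin m, gridColor (p i.castSucc) (p i.succ) = col) : m < n := by
  fin_cases col
  · refine lt_of_forall_castSucc_lt_succ (p := fun i => (p i).1) fun i => ?_
    by_contra h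
    simpa [gridColor, h] using hcol i
  · refine lt_of_forall_castSucc_lt_succ (p := fun i => (p i).2) fun i => ?_
    have h1 : (p i.succ).1 ≤ (p i.castSucc).1 := by
      by_contra h
      simpa [gridColor, not_le.1 h] using hcol i
    by_contra h2
    exact hp i (Prod.le_def.2 ⟨h1, not_lt.1 h2⟩)

noncomputable def freshElem {α : Type*} [Nonempty α] (s t : Finset α) : α :=
  Classical.epsilon fun x => x ∈ t ∧ x ∉ s

theorem freshElem_spec {α : Type*} [Nonempty α] {s t : Finset α} (h : ¬ t ⊆ s) :
    freshElem s t ∈ t ∧ freshElem s t ∉ s :=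
  Classical.epsilon_spec (Finset.not_subset.1 h)

-- Colourings are `(k + 2)`-uniform below, so their line partitions live in `PT n k`.
section LowerBound

variable {n N k : ℕ} [NeZero n]

noncomputable def chain : (j : ℕ) → (Fin (j + 1) → PT n j) → Fin n × Fin n
  | 0, g => g 0
  | j + 1, g => chain j fun t => freshElem (g t.castSucc) (g t.succ)

theorem chain_succ_not_le : ∀ (j : ℕ) (g : Fin (j + 2) → PT n j),
    (∀ t, PT.IsPart n j (g t)) → (∀ t : Fin (j + 1), ¬ g t.succ ≤ g t.castSucc) →
    ¬ chain j (g ∘ Fin.succ) ≤ chain j (g ∘ Fin.castSucc)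
  | 0, _, _, hg => hg 0
  | j + 1, g, hpart, hg => by
    let e : Fin (j + 2) → PT n j := fun t => freshElem (g t.castSucc) (g t.succ)
    have he := fun t => freshElem_spec (hg t)
    have he_part : ∀ t, PT.IsPart n j (e t) := fun t => (hpart _).of_mem (he t).1
    refine chain_succ_not_le j e he_part fun t hle => (he t.succ).2 ?_
    exact (hpart _).mem_of_le (he t.castSucc).1 (he_part _) hle

noncomputable def chainColoring (ν : Fin N → PT n k) (f : Fin (k + 2) → Fin N) : Fin 2 :=
  gridColor (chain k (ν ∘ f ∘ Fin.castSucc)) (chain k (ν ∘ f ∘ Fin.succ))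

theorem not_hasMonoPathK_chainColoring (ν : Fin N → PT n k)
    (hpart : ∀ i, PT.IsPart n k (ν i)) (hν : ∀ i j, i < j → ¬ ν j ≤ ν i) :
    ¬ HasMonoPathK (k + 2) n (chainColoring ν) := by
  rintro ⟨x, hx, col, hcol⟩
  let p : Fin (n + 1) → Fin n × Fin n := fun i => chain k fun t => ν (x ⟨i + t, by omega⟩)
  let edge : Fin n → Fin (k + 2) → PT n k := fun i t => ν (x ⟨i + t, by omega⟩)
  have hp_succ : ∀ i, p i.succ = chain k (edge i ∘ Fin.succ) := by
    intro i
    refine congrArg (chain k) (funext fun t => ?_)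
    simp only [edge, Function.comp, Fin.val_succ]
    congr 3
    omega
  refine (lt_of_gridColor_eq p (fun i => ?_) col fun i => ?_).false
  · rw [hp_succ]
    refine chain_succ_not_le k (edge i) (fun _ => hpart _) fun t => hν _ _ (hx ?_)
    simp [Fin.lt_def]
  · rw [hp_succ]
    exact hcol i i.isLt

theorem exists_not_hasMonoPathK (hN : N ≤ Nat.card {F : PT n k // PT.IsPart n k F}) :
    ∃ c : (Fin (k + 2) → Fin N) → Fin 2, ¬ HasMonoPathK (k + 2) n c := by
  obtain ⟨ν, hν⟩ := exists_fin_not_le_of_le_card hN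
  exact ⟨chainColoring (Subtype.val ∘ ν),
    not_hasMonoPathK_chainColoring _ (fun i => (ν i).2) hν⟩

end LowerBound

section Sequences

variable {α : Type*}

-- Tuples are sequences of which only a prefix is read: `shiftIn l a v` turns
-- `(a₀, …, a_{l-1})` into `(a₁, …, a_{l-1}, v)`.
def consSeq (u : α) (a : ℕ → α) : ℕ → α
  | 0 => u
  | t + 1 => a t

def shiftIn (l : ℕ) (a : ℕ → α) (v : α) : ℕ → α :=
  fun t => if t + 1 < l then a (t + 1) else v

theorem consSeq_shiftIn (u : α) (a : ℕ → α) (v : α) (l : ℕ) :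
    consSeq (a 0) (shiftIn (l + 1) a v) = shiftIn (l + 2) (consSeq u a) v := by
  funext t
  cases t <;> simp [consSeq, shiftIn]

theorem strictMonoOn_consSeq [Preorder α] {u : α} {a : ℕ → α} {l : ℕ} (hu : u < a 0)
    (ha : StrictMonoOn a (Set.Iio (l + 1))) : StrictMonoOn (consSeq u a) (Set.Iio (l + 2)) := by
  rintro (_ | s) hs (_ | t) ht hst
  · simp at hst
  · exact hu.trans_le (ha.monotoneOn (by simp) (by simpa using ht) (Nat.zero_le t))
  · simp at hst
  · exact ha (by simpa using hs) (by simpa using ht) (by simpa using hst)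

end Sequences

section UpperBound

variable {n N k : ℕ} (c : (Fin (k + 2) → Fin N) → Fin 2)

def snocEdge (a : ℕ → Fin N) (v : Fin N) : Fin (k + 2) → Fin N :=
  fun j => if (j : ℕ) ≤ k then a j else v

def EndsMonoPath (col : Fin 2) (m : ℕ) (a : ℕ → Fin N) : Prop :=
  ∃ x : ℕ → Fin N, StrictMonoOn x (Set.Iio (m + k + 1)) ∧
    (∀ i < m, c (fun j => x (i + j)) = col) ∧ ∀ t ≤ k, x (m + t) = a t

-- Capped at `n - 1`, which is no restriction when no monochromatic path has length `n`.
open scoped Classical in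
noncomputable def pathRank (n : ℕ) (col : Fin 2) (a : ℕ → Fin N) : ℕ :=
  Nat.findGreatest (fun m => EndsMonoPath c col m a) (n - 1)

theorem pathRank_lt [NeZero n] (col : Fin 2) (a : ℕ → Fin N) : pathRank c n col a < n := by
  classical
  exact (Nat.findGreatest_le _).trans_lt (Nat.sub_one_lt (NeZero.ne n))

open scoped Classical in
noncomputable def label (n : ℕ) [NeZero n] : (d : ℕ) → (ℕ → Fin N) → PT n d
  | 0, a => (⟨pathRank c n 0 a, pathRank_lt c 0 a⟩, ⟨pathRank c n 1 a, pathRank_lt c 1 a⟩)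
  | d + 1, a => (Finset.univ.filter fun S : PT n d =>
      PT.IsPart n d S ∧ ∃ u < a 0, S ≤ label n d (consSeq u a) : Finset (PT n d))

variable {c}

theorem EndsMonoPath.lt (hc : ¬ HasMonoPathK (k + 2) n c) {col : Fin 2} {m : ℕ}
    {a : ℕ → Fin N} (h : EndsMonoPath c col m a) : m < n := by
  obtain ⟨x, hx, hcol, -⟩ := h
  by_contra! hnm
  refine hc ⟨fun s => x s, fun s t hst => hx ?_ ?_ hst, col, fun i hi => hcol i (by omega)⟩
  · simp only [Set.mem_Iio]; omega
  · simp only [Set.mem_Iio]; omega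

theorem endsMonoPath_zero (col : Fin 2) {a : ℕ → Fin N}
    (ha : StrictMonoOn a (Set.Iio (k + 1))) : EndsMonoPath c col 0 a :=
  ⟨a, by simpa using ha, by simp, by simp⟩

theorem endsMonoPath_pathRank (col : Fin 2) {a : ℕ → Fin N}
    (ha : StrictMonoOn a (Set.Iio (k + 1))) : EndsMonoPath c col (pathRank c n col a) a := by
  classical
  exact Nat.findGreatest_spec (P := fun m => EndsMonoPath c col m a) (Nat.zero_le _)
    (endsMonoPath_zero col ha)

theorem le_pathRank {col : Fin 2} {m : ℕ} {a : ℕ → Fin N} (hm : m < n)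
    (h : EndsMonoPath c col m a) : m ≤ pathRank c n col a := by
  classical
  exact Nat.le_findGreatest (Nat.le_sub_one_of_lt hm) h

theorem EndsMonoPath.shiftIn {col : Fin 2} {m : ℕ} {a : ℕ → Fin N} {v : Fin N}
    (hv : ∀ t ≤ k, a t < v) (hcol : c (snocEdge a v) = col) (h : EndsMonoPath c col m a) :
    EndsMonoPath c col (m + 1) (shiftIn (k + 1) a v) := by
  obtain ⟨x, hx, hwin, hend⟩ := h
  have hlt : ∀ s < m + k + 1, x s < v := fun s hs =>
    (hx.monotoneOn hs (by simp) (by omega : s ≤ m + k)).trans_lt ((hend k le_rfl) ▸ hv k le_rfl)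
  refine ⟨fun s => if s < m + k + 1 then x s else v, ?_, fun i hi => ?_, fun t ht => ?_⟩
  · intro s hs t ht hst
    simp only [Set.mem_Iio] at hs ht
    by_cases hts : t < m + k + 1
    · simpa [hst.trans hts, hts] using hx (hst.trans hts) hts hst
    · simpa [show s < m + k + 1 by omega, hts] using hlt s (by omega)
  · rcases Nat.lt_succ_iff_lt_or_eq.1 hi with hi | rfl
    · convert hwin i hi using 2
      funext j
      simp [show i + (j : ℕ) < m + k + 1 by omega]
    · convert hcol using 2
      funext j
      simp only [snocEdge]
      split_ifs with h1 h2 h2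
      · simpa using hend j h2
      · omega
      · omega
      · rfl
  · simp only [MonotonePath.shiftIn]
    split_ifs with h1 h2 h2
    · simpa [Nat.add_assoc, Nat.add_comm 1 t] using hend (t + 1) (by omega)
    · omega
    · omega
    · rfl

theorem pathRank_lt_pathRank_shiftIn (hc : ¬ HasMonoPathK (k + 2) n c) {a : ℕ → Fin N}
    {v : Fin N} (ha : StrictMonoOn a (Set.Iio (k + 1))) (hv : ∀ t ≤ k, a t < v) :
    pathRank c n (c (snocEdge a v)) a <
      pathRank c n (c (snocEdge a v)) (shiftIn (k + 1) a v) := by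
  have hext := (endsMonoPath_pathRank (n := n) (c (snocEdge a v)) ha).shiftIn hv rfl
  exact le_pathRank (hext.lt hc) hext

variable [NeZero n]

theorem mem_label_succ {d : ℕ} {a : ℕ → Fin N} {S : PT n d} :
    S ∈ label c n (d + 1) a ↔
      PT.IsPart n d S ∧ ∃ u < a 0, S ≤ label c n d (consSeq u a) := by
  classical
  exact Finset.mem_filter.trans (and_iff_right (Finset.mem_univ _))

theorem isPart_label : ∀ (d : ℕ) (a : ℕ → Fin N), PT.IsPart n d (label c n d a)
  | 0, _ => trivial
  | d + 1, _ => fun S hS => by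
    obtain ⟨hS, u, hu, hle⟩ := mem_label_succ.1 hS
    refine ⟨hS, fun S' hS' hle' => mem_label_succ.2 ⟨hS', u, hu, ?_⟩⟩
    exact (PT.sub_iff_le.1 hle').trans hle

theorem label_shiftIn_not_le (hc : ¬ HasMonoPathK (k + 2) n c) :
    ∀ d l, d + l = k → ∀ (a : ℕ → Fin N) (v : Fin N), StrictMonoOn a (Set.Iio (l + 1)) →
      (∀ t ≤ l, a t < v) → ¬ label c n d (shiftIn (l + 1) a v) ≤ label c n d a
  | 0, l, hl, a, v, ha, hv, hle => by
    obtain rfl : l = k := by simpa using hl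
    have hrank : ∀ col, pathRank c n col (shiftIn (l + 1) a v) ≤ pathRank c n col a := by
      intro col
      fin_cases col
      exacts [(Prod.mk_le_mk.1 hle).1, (Prod.mk_le_mk.1 hle).2]
    exact (hrank _).not_gt (pathRank_lt_pathRank_shiftIn hc ha hv)
  | d + 1, l, hl, a, v, ha, hv, hle => by
    have hmem : label c n d (consSeq (a 0) (shiftIn (l + 1) a v)) ∈
        label c n (d + 1) (shiftIn (l + 1) a v) := by
      refine mem_label_succ.2 ⟨isPart_label d _, a 0, ?_, le_rfl⟩
      by_cases hl0 : 0 < l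
      · simpa [shiftIn, hl0] using ha (by simp) (by simpa using hl0) Nat.zero_lt_one
      · simpa [shiftIn, hl0] using hv 0 (Nat.zero_le l)
    obtain ⟨-, u, hu, hle'⟩ := mem_label_succ.1 (hle hmem)
    rw [consSeq_shiftIn u] at hle'
    refine label_shiftIn_not_le hc d (l + 1) (by omega) (consSeq u a) v
      (strictMonoOn_consSeq hu ha) (fun t ht => ?_) hle'
    rcases t with _ | t
    · exact hu.trans (hv 0 (Nat.zero_le l))
    · exact hv t (by omega)

theorem card_le_of_not_hasMonoPathK (hc : ¬ HasMonoPathK (k + 2) n c) :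
    N ≤ Nat.card {F : PT n k // PT.IsPart n k F} := by
  let φ : Fin N → {F : PT n k // PT.IsPart n k F} :=
    fun v => ⟨label c n k fun _ => v, isPart_label k _⟩
  have hφ : ∀ u v, u < v → ¬ φ v ≤ φ u := fun u v huv =>
    label_shiftIn_not_le hc k 0 (Nat.add_zero k) (fun _ => u) v
      (fun s hs t ht hst => absurd hst (by simp_all)) (fun _ _ => huv)
  have hinj : Function.Injective φ := fun u v h => by
    by_contra hne
    rcases lt_or_gt_of_ne hne with huv | hvu
    exacts [hφ u v huv h.ge, hφ v u hvu h.le]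
  simpa using Nat.card_le_card_of_injective φ hinj

end UpperBound

end MonotonePath

/-- For every `k ≥ 2`, `n ≥ 2`: `N_k(2,n) = ρ_k(n) + 1`, where `ρ_k(n) = |P^k[n]|` is
the number of order-`k` line partitions. -/
theorem stmt17 (k n : ℕ) (hk : 2 ≤ k) (hn : 2 ≤ n) :
    sInf {N : ℕ | ∀ c : (Fin k → Fin N) → Fin 2, HasMonoPathK k n c}
      = Nat.card {F : PT n (k - 2) // PT.IsPart n (k - 2) F} + 1 := by
  obtain ⟨k, rfl⟩ : ∃ m, k = m + 2 := ⟨k - 2, by omega⟩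
  have : NeZero n := ⟨by omega⟩
  have hmem : Nat.card {F : PT n k // PT.IsPart n k F} + 1 ∈
      {N : ℕ | ∀ c : (Fin (k + 2) → Fin N) → Fin 2, HasMonoPathK (k + 2) n c} := fun c =>
    by_contra fun hc => (MonotonePath.card_le_of_not_hasMonoPathK hc).not_gt (Nat.lt_succ_self _)
  refine le_antisymm (Nat.sInf_le hmem) (le_csInf ⟨_, hmem⟩ fun N hN => ?_)
  by_contra! hN_lt
  obtain ⟨c, hc⟩ := MonotonePath.exists_not_hasMonoPathK (Nat.le_of_lt_succ hN_lt)
  exact hc (hN c)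
end
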